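/- arXiv:2403.02900 — 7 statements merged into one kernel-verified Lean document; each statement's English description precedes it below -/
import Mathlib

section
/- If u ∈ L²(V,ν_G) ∩ L^p(V,ν_G) and Δ_p^G u ∈ L¹(V,ν_G), then ∑_{x∈V} Δ_p^G u(x) d_x = 0 (mass conservation for the p-Laplacian). -/
/-!
Multiplied by `d x`, the p-Laplacian becomes the row sum of the flux
`F x y = |u y - u x| ^ (p - 2) * (u y - u x) * w x y`, which is antisymmetric because `w` is.
Since `|F x y| ≤ 2 ^ (p - 2) * (|u x| ^ (p - 1) + |u y| ^ (p - 1)) * w x y` and `|u| ^ (p - 1)` is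
`ν`-summable by interpolation between `L²` and `Lᵖ` (this needs `2 ≤ p - 1 ≤ p`), `F` is summable
on `V × V`. Fubini then shows that the double sum equals its own negative.
-/

open Function

theorem tsum_tsum_eq_zero_of_antisymm {α β : Type*} [AddCommGroup α] [UniformSpace α]
    [IsUniformAddGroup α] [CompleteSpace α] [T0Space α] [IsAddTorsionFree α]
    {f : β → β → α} (hf : Summable (uncurry f)) (hanti : ∀ x y, f y x = -f x y) :
    ∑' x, ∑' y, f x y = 0 := by
  refine self_eq_neg.mp ?_
  calc ∑' x, ∑' y, f x y = ∑' y, ∑' x, f x y := hf.tsum_comm.symm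
    _ = ∑' y, -∑' x, f y x := tsum_congr fun y => by
          rw [← tsum_neg]; exact tsum_congr fun x => hanti y x
    _ = -∑' x, ∑' y, f x y := tsum_neg

theorem Real.rpow_le_rpow_add_rpow {a q r s : ℝ} (ha : 0 ≤ a) (hq : 0 < q) (hrq : r ≤ q)
    (hqs : q ≤ s) : a ^ q ≤ a ^ r + a ^ s := by
  rcases ha.eq_or_lt with rfl | ha
  · rw [Real.zero_rpow hq.ne']
    exact add_nonneg (Real.rpow_nonneg le_rfl r) (Real.rpow_nonneg le_rfl s)
  rcases le_total a 1 with ha1 | ha1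
  · linarith [Real.rpow_le_rpow_of_exponent_ge ha ha1 hrq, Real.rpow_nonneg ha.le s]
  · linarith [Real.rpow_le_rpow_of_exponent_le ha1 hqs, Real.rpow_nonneg ha.le r]

theorem summable_rpow_mul_of_le_of_le {ι : Type*} {f m : ι → ℝ} {q r s : ℝ}
    (hf : ∀ i, 0 ≤ f i) (hm : ∀ i, 0 ≤ m i) (hq : 0 < q) (hrq : r ≤ q) (hqs : q ≤ s)
    (hr : Summable fun i => f i ^ r * m i) (hs : Summable fun i => f i ^ s * m i) :
    Summable fun i => f i ^ q * m i := by
  refine (hr.add hs).of_nonneg_of_le (fun i => by have := hf i; have := hm i; positivity)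
    fun i => ?_
  rw [← add_mul]
  exact mul_le_mul_of_nonneg_right (Real.rpow_le_rpow_add_rpow (hf i) hq hrq hqs) (hm i)

theorem Real.abs_sub_rpow_le {q : ℝ} (a b : ℝ) (hq : 1 ≤ q) :
    |a - b| ^ q ≤ 2 ^ (q - 1) * (|a| ^ q + |b| ^ q) := by
  have h : (|a| + |b|) ^ q ≤ 2 ^ (q - 1) * (|a| ^ q + |b| ^ q) := by
    exact_mod_cast NNReal.rpow_add_le_mul_rpow_add_rpow ‖a‖₊ ‖b‖₊ hq
  exact (Real.rpow_le_rpow (abs_nonneg _) (abs_sub a b) (by linarith)).trans h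

theorem Real.abs_abs_rpow_mul_self {q : ℝ} (a : ℝ) (hq : q ≠ -1) :
    |(|a| ^ q * a)| = |a| ^ (q + 1) := by
  rcases eq_or_ne a 0 with rfl | ha
  · rw [mul_zero, abs_zero, Real.zero_rpow (by contrapose! hq; linarith)]
  · rw [abs_mul, abs_of_nonneg (Real.rpow_nonneg (abs_nonneg a) _),
      Real.rpow_add_one (abs_ne_zero.mpr ha)]

theorem summable_uncurry_mul_of_summable_mul_tsum {α β : Type*} {f : α → ℝ} {w : α → β → ℝ}
    (hf : ∀ x, 0 ≤ f x) (hw : ∀ x y, 0 ≤ w x y) (hrow : ∀ x, Summable (w x))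
    (h : Summable fun x => f x * ∑' y, w x y) :
    Summable fun z : α × β => f z.1 * w z.1 z.2 := by
  refine (summable_prod_of_nonneg fun z => mul_nonneg (hf z.1) (hw z.1 z.2)).mpr
    ⟨fun x => (hrow x).mul_left (f x), ?_⟩
  simpa only [tsum_mul_left] using h

noncomputable def pLaplacianFlux {V : Type*} (p : ℝ) (u : V → ℝ) (w : V → V → ℝ) (x y : V) : ℝ :=
  |u y - u x| ^ (p - 2) * (u y - u x) * w x y

section pLaplacianFlux

variable {V : Type*} {p : ℝ} {u : V → ℝ} {w : V → V → ℝ}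

theorem pLaplacianFlux_swap (hsymm : ∀ x y, w x y = w y x) (x y : V) :
    pLaplacianFlux p u w y x = -pLaplacianFlux p u w x y := by
  rw [pLaplacianFlux, pLaplacianFlux, abs_sub_comm, hsymm]
  ring

theorem abs_pLaplacianFlux (hp : p ≠ 1) (hw : ∀ x y, 0 ≤ w x y) (x y : V) :
    |pLaplacianFlux p u w x y| = |u y - u x| ^ (p - 1) * w x y := by
  rw [pLaplacianFlux, abs_mul, abs_of_nonneg (hw x y),
    Real.abs_abs_rpow_mul_self _ (by contrapose! hp; linarith)]
  ring_nf

theorem summable_uncurry_pLaplacianFlux (hp : 2 ≤ p) (hw : ∀ x y, 0 ≤ w x y)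
    (hsymm : ∀ x y, w x y = w y x) (hrow : ∀ x, Summable (w x))
    (hu : Summable fun x => |u x| ^ (p - 1) * ∑' y, w x y) :
    Summable (uncurry (pLaplacianFlux p u w)) := by
  have hsrc := summable_uncurry_mul_of_summable_mul_tsum
    (fun x => Real.rpow_nonneg (abs_nonneg (u x)) _) hw hrow hu
  have htgt : Summable fun z : V × V => |u z.2| ^ (p - 1) * w z.1 z.2 := by
    refine ((Equiv.prodComm V V).summable_iff.mpr hsrc).congr fun z => ?_
    rw [comp_apply, Equiv.prodComm_apply, Prod.fst_swap, Prod.snd_swap, hsymm]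
  refine Summable.of_norm_bounded ((htgt.add hsrc).mul_left (2 ^ (p - 2))) fun z => ?_
  rw [Real.norm_eq_abs, uncurry_apply_pair, abs_pLaplacianFlux (by linarith) hw, ← add_mul,
    ← mul_assoc]
  refine mul_le_mul_of_nonneg_right ?_ (hw z.1 z.2)
  simpa only [sub_sub, one_add_one_eq_two] using
    Real.abs_sub_rpow_le (u z.2) (u z.1) (by linarith : 1 ≤ p - 1)

end pLaplacianFlux

theorem stmt2_general {V : Type*} (w : V → V → ℝ) (d : V → ℝ)
    (hw : ∀ x y, 0 ≤ w x y) (hsymm : ∀ x y, w x y = w y x)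
    (hd : ∀ x, d x = ∑' y, w x y) (hdpos : ∀ x, 0 < d x)
    (p : ℝ) (hp : 3 ≤ p) (u : V → ℝ)
    (hu2 : Summable fun x => |u x| ^ (2 : ℝ) * d x)
    (hup : Summable fun x => |u x| ^ p * d x)
    (Δ : V → ℝ)
    (hΔ : ∀ x, Δ x = (1 / d x) * ∑' y, |u y - u x| ^ (p - 2) * (u y - u x) * w x y) :
    ∑' x, Δ x * d x = 0 := by
  have hrow : ∀ x, Summable (w x) := fun x => by
    by_contra h
    exact (hdpos x).ne' ((hd x).trans (tsum_eq_zero_of_not_summable h))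
  have hu : Summable fun x => |u x| ^ (p - 1) * d x :=
    summable_rpow_mul_of_le_of_le (fun x => abs_nonneg (u x)) (fun x => (hdpos x).le)
      (by linarith) (by linarith) (by linarith) hu2 hup
  simp only [hd] at hu
  calc ∑' x, Δ x * d x = ∑' x, ∑' y, pLaplacianFlux p u w x y := tsum_congr fun x => by
        rw [hΔ x, mul_comm, ← mul_assoc, mul_one_div_cancel (hdpos x).ne', one_mul]
        rfl
    _ = 0 := tsum_tsum_eq_zero_of_antisymm
        (summable_uncurry_pLaplacianFlux (by linarith) hw hsymm hrow hu) (pLaplacianFlux_swap hsymm)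

/-- Mass conservation for the graph p-Laplacian: ∑_x Δ_p^G u(x) d_x = 0. -/
theorem stmt2 {V : Type*} [Countable V] (w : V → V → ℝ) (d : V → ℝ)
    (hw : ∀ x y, 0 ≤ w x y) (hsymm : ∀ x y, w x y = w y x)
    (hd : ∀ x, d x = ∑' y, w x y) (hdpos : ∀ x, 0 < d x)
    (p : ℝ) (hp : 3 ≤ p) (u : V → ℝ)
    (hu2 : Summable fun x => |u x| ^ (2 : ℝ) * d x)
    (hup : Summable fun x => |u x| ^ p * d x)
    (Δ : V → ℝ)
    (hΔ : ∀ x, Δ x = (1 / d x) * ∑' y, |u y - u x| ^ (p - 2) * (u y - u x) * w x y)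
    (hΔ1 : Summable fun x => |Δ x| * d x) :
    ∑' x, Δ x * d x = 0 :=
  stmt2_general w d hw hsymm hd hdpos p hp u hu2 hup Δ hΔ
end

section
/- For any (u₁, v₁), (u₂, v₂) with vᵢ = -Δ_p^G uᵢ, uᵢ ∈ L²(V,ν_G) ∩ L^p(V,ν_G), and any smooth nondecreasing bounded function q: ℝ → ℝ with 0 ≤ q' ≤ 1, one has ∑_{x∈V} q(u₁(x)-u₂(x)) (v₁(x)-v₂(x)) d_x ≥ 0. -/
open Real

private lemma phi_abs (p : ℝ) (hp : 3 ≤ p) (t : ℝ) :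
    |(|t| ^ (p - 2) * t)| = |t| ^ (p - 1) := by
  rcases eq_or_ne t 0 with h | h
  · simp [h, Real.zero_rpow (by linarith : p - 2 ≠ 0), Real.zero_rpow (by linarith : p - 1 ≠ 0)]
  · rw [abs_mul, abs_of_nonneg (Real.rpow_nonneg (abs_nonneg t) _)]
    rw [← Real.rpow_add_one (abs_ne_zero.2 h)]
    ring_nf

private lemma phi_odd (p t : ℝ) : |(-t)| ^ (p - 2) * (-t) = -(|t| ^ (p - 2) * t) := by
  rw [abs_neg]; ring

private lemma phi_mono (p : ℝ) (hp : 3 ≤ p) :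
    Monotone (fun t : ℝ => |t| ^ (p - 2) * t) := by
  have key : ∀ s t : ℝ, 0 ≤ s → s ≤ t → |s| ^ (p - 2) * s ≤ |t| ^ (p - 2) * t := by
    intro s t hs hst
    have ht : 0 ≤ t := hs.trans hst
    rw [abs_of_nonneg hs, abs_of_nonneg ht]
    exact mul_le_mul (Real.rpow_le_rpow hs hst (by linarith)) hst hs
      (Real.rpow_nonneg ht _)
  intro s t hst
  show |s| ^ (p - 2) * s ≤ |t| ^ (p - 2) * t
  rcases le_or_gt 0 s with hs | hs
  · exact key s t hs hst
  rcases le_or_gt 0 t with ht | ht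
  · have h1 : |s| ^ (p - 2) * s ≤ 0 :=
      mul_nonpos_of_nonneg_of_nonpos (Real.rpow_nonneg (abs_nonneg s) _) hs.le
    have h2 : (0:ℝ) ≤ |t| ^ (p - 2) * t :=
      mul_nonneg (Real.rpow_nonneg (abs_nonneg t) _) ht
    linarith
  · have := key (-t) (-s) (by linarith) (by linarith)
    rw [phi_odd, phi_odd] at this
    simpa using this

private lemma rpow_abs_le (p : ℝ) (hp : 3 ≤ p) (t : ℝ) :
    |t| ^ (p - 1) ≤ |t| ^ (2:ℝ) + |t| ^ p := by
  rcases eq_or_ne t 0 with h | h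
  · simp [h, Real.zero_rpow (by linarith : p - 1 ≠ 0)]
    positivity
  have h0 : 0 < |t| := abs_pos.2 h
  rcases le_or_gt (|t|) 1 with h1 | h1
  · have := Real.rpow_le_rpow_of_exponent_ge h0 h1 (by linarith : (2:ℝ) ≤ p - 1)
    have h2 : (0:ℝ) ≤ |t| ^ p := Real.rpow_nonneg (abs_nonneg t) _
    linarith
  · have := Real.rpow_le_rpow_of_exponent_le h1.le (by linarith : p - 1 ≤ p)
    have h2 : (0:ℝ) ≤ |t| ^ (2:ℝ) := Real.rpow_nonneg (abs_nonneg t) _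
    linarith

private lemma sub_rpow_le (p : ℝ) (hp : 3 ≤ p) (a b : ℝ) :
    |a - b| ^ (p - 1) ≤ 2 ^ (p - 1) * (|a| ^ (p - 1) + |b| ^ (p - 1)) := by
  have h1 : |a - b| ≤ 2 * max |a| |b| := by
    calc |a - b| ≤ |a| + |b| := abs_sub a b
    _ ≤ 2 * max |a| |b| := by
        rcases le_total (|a|) (|b|) with h | h
        · rw [max_eq_right h]; linarith
        · rw [max_eq_left h]; linarith
  calc |a - b| ^ (p - 1) ≤ (2 * max |a| |b|) ^ (p - 1) :=
        Real.rpow_le_rpow (abs_nonneg _) h1 (by linarith)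
  _ = 2 ^ (p - 1) * (max |a| |b|) ^ (p - 1) :=
        Real.mul_rpow (by norm_num) (le_max_of_le_left (abs_nonneg a))
  _ ≤ 2 ^ (p - 1) * (|a| ^ (p - 1) + |b| ^ (p - 1)) := by
        gcongr
        rcases le_total (|a|) (|b|) with h | h
        · rw [max_eq_right h]
          have : (0:ℝ) ≤ |a| ^ (p-1) := Real.rpow_nonneg (abs_nonneg a) _
          linarith
        · rw [max_eq_left h]
          have : (0:ℝ) ≤ |b| ^ (p-1) := Real.rpow_nonneg (abs_nonneg b) _
          linarith

/-- Complete-accretivity inequality for -Δ_p^G. -/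
theorem stmt4 {V : Type*} [Countable V] (w : V → V → ℝ) (d : V → ℝ)
    (hw : ∀ x y, 0 ≤ w x y) (hsymm : ∀ x y, w x y = w y x)
    (hd : ∀ x, d x = ∑' y, w x y) (hdpos : ∀ x, 0 < d x)
    (p : ℝ) (hp : 3 ≤ p)
    (u₁ u₂ v₁ v₂ : V → ℝ)
    (hu₁2 : Summable fun x => |u₁ x| ^ (2 : ℝ) * d x)
    (hu₁p : Summable fun x => |u₁ x| ^ p * d x)
    (hu₂2 : Summable fun x => |u₂ x| ^ (2 : ℝ) * d x)
    (hu₂p : Summable fun x => |u₂ x| ^ p * d x)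
    (hv₁ : ∀ x, v₁ x = -((1 / d x) * ∑' y, |u₁ y - u₁ x| ^ (p - 2) * (u₁ y - u₁ x) * w x y))
    (hv₂ : ∀ x, v₂ x = -((1 / d x) * ∑' y, |u₂ y - u₂ x| ^ (p - 2) * (u₂ y - u₂ x) * w x y))
    (q : ℝ → ℝ) (hq : ContDiff ℝ (⊤ : ℕ∞) q) (hq' : ∀ t, 0 ≤ deriv q t ∧ deriv q t ≤ 1)
    (hqmono : Monotone q) (hqbdd : ∃ M, ∀ t, |q t| ≤ M)
    (hsum : Summable fun x => q (u₁ x - u₂ x) * (v₁ x - v₂ x) * d x) :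
    0 ≤ ∑' x, q (u₁ x - u₂ x) * (v₁ x - v₂ x) * d x := by
  obtain ⟨M, hM⟩ := hqbdd
  have hM0 : 0 ≤ M := (abs_nonneg _).trans (hM 0)
  set K : ℝ := 2 ^ (p - 1) with hKdef
  have hK0 : 0 ≤ K := Real.rpow_nonneg (by norm_num) _
  -- row summability of w
  have hwsum : ∀ x, Summable (fun y => w x y) := by
    intro x
    by_contra h
    have h0 := tsum_eq_zero_of_not_summable h
    have := hdpos x
    rw [hd x, h0] at this
    exact lt_irrefl _ this
  have hwle : ∀ x y, w x y ≤ d y := by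
    intro x y
    rw [hsymm, hd y]
    exact Summable.le_tsum (hwsum y) x (fun j _ => hw y j)
  -- the weight function c
    -- c u x = |u x|^2 + |u x|^p
  set c : (V → ℝ) → V → ℝ := fun u x => |u x| ^ (2:ℝ) + |u x| ^ p with hcdef
  have hc0 : ∀ u x, 0 ≤ c u x := fun u x =>
    add_nonneg (Real.rpow_nonneg (abs_nonneg _) _) (Real.rpow_nonneg (abs_nonneg _) _)
  have hc₁d : Summable (fun x => c u₁ x * d x) :=
    (hu₁2.add hu₁p).congr (fun x => by simp only [hcdef]; ring)
  have hc₂d : Summable (fun x => c u₂ x * d x) :=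
    (hu₂2.add hu₂p).congr (fun x => by simp only [hcdef]; ring)
  -- pointwise bound on φ
  have hphib : ∀ (u : V → ℝ) (x y : V),
      |(|u y - u x| ^ (p - 2) * (u y - u x))| ≤ K * (c u x + c u y) := by
    intro u x y
    rw [phi_abs p hp]
    calc |u y - u x| ^ (p - 1) ≤ 2 ^ (p - 1) * (|u y| ^ (p - 1) + |u x| ^ (p - 1)) :=
          sub_rpow_le p hp _ _
    _ ≤ K * (c u x + c u y) := by
        rw [hKdef]
        have h1 := rpow_abs_le p hp (u y)
        have h2 := rpow_abs_le p hp (u x)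
        have : |u y| ^ (p-1) + |u x| ^ (p-1) ≤ c u x + c u y := by
          simp only [hcdef]; linarith
        nlinarith [Real.rpow_nonneg (show (0:ℝ) ≤ 2 by norm_num) (p-1)]
  -- row summability of the nonlinear terms
  have hrow : ∀ (u : V → ℝ), Summable (fun x => c u x * d x) → ∀ x,
      Summable (fun y => |u y - u x| ^ (p - 2) * (u y - u x) * w x y) := by
    intro u hu x
    apply Summable.of_norm_bounded (g := fun y => K * (c u x + c u y) * w x y)
    · have h1 : Summable (fun y => K * (c u x) * w x y) := ((hwsum x).mul_left _)
      have h2 : Summable (fun y => K * (c u y * w x y)) := by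
        apply Summable.mul_left
        apply Summable.of_nonneg_of_le (fun y => mul_nonneg (hc0 u y) (hw x y))
          (fun y => mul_le_mul_of_nonneg_left (hwle x y) (hc0 u y)) hu
      exact (h1.add h2).congr (fun y => by ring)
    · intro y
      rw [Real.norm_eq_abs, abs_mul, abs_of_nonneg (hw x y)]
      exact mul_le_mul_of_nonneg_right (hphib u x y) (hw x y)
  -- summability on the product
  have hprod1 : ∀ (f : V → ℝ), (∀ x, 0 ≤ f x) → Summable (fun x => f x * d x) →
      Summable (fun z : V × V => f z.1 * w z.1 z.2) := by
    intro f hf hs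
    rw [summable_prod_of_nonneg (fun z => mul_nonneg (hf _) (hw _ _))]
    refine ⟨fun x => (hwsum x).mul_left (f x), ?_⟩
    apply hs.congr
    intro x
    show f x * d x = ∑' y, f x * w x y
    rw [tsum_mul_left, ← hd]
  have hprod2 : ∀ (f : V → ℝ), (∀ x, 0 ≤ f x) → Summable (fun x => f x * d x) →
      Summable (fun z : V × V => f z.2 * w z.1 z.2) := by
    intro f hf hs
    have h2 : Summable (fun z : V × V => f z.1 * w z.2 z.1) :=
      (hprod1 f hf hs).congr (fun z => by rw [hsymm])
    exact (Equiv.prodComm V V).summable_iff.mp h2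
  -- the summand on the product space
  set F : V × V → ℝ := fun z => q (u₁ z.1 - u₂ z.1) *
      (|u₂ z.2 - u₂ z.1| ^ (p - 2) * (u₂ z.2 - u₂ z.1)
        - |u₁ z.2 - u₁ z.1| ^ (p - 2) * (u₁ z.2 - u₁ z.1)) * w z.1 z.2 with hF
  set cc : V → ℝ := fun x => c u₁ x + c u₂ x with hccdef
  have hcc0 : ∀ x, 0 ≤ cc x := fun x => add_nonneg (hc0 u₁ x) (hc0 u₂ x)
  have hccd : Summable (fun x => cc x * d x) :=
    (hc₁d.add hc₂d).congr (fun x => by simp only [hccdef]; ring)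
  have hFsum : Summable F := by
    apply Summable.of_norm_bounded
      (g := fun z : V × V => M * K * (cc z.1 * w z.1 z.2 + cc z.2 * w z.1 z.2))
    · exact ((hprod1 cc hcc0 hccd).add (hprod2 cc hcc0 hccd)).mul_left (M * K)
    · rintro ⟨x, y⟩
      rw [hF]
      simp only [Real.norm_eq_abs]
      rw [abs_mul, abs_mul, abs_of_nonneg (hw x y)]
      have hb : |(|u₂ y - u₂ x| ^ (p - 2) * (u₂ y - u₂ x)
          - |u₁ y - u₁ x| ^ (p - 2) * (u₁ y - u₁ x))| ≤ K * (cc x + cc y) := by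
        calc |(|u₂ y - u₂ x| ^ (p - 2) * (u₂ y - u₂ x)
            - |u₁ y - u₁ x| ^ (p - 2) * (u₁ y - u₁ x))|
            ≤ |(|u₂ y - u₂ x| ^ (p - 2) * (u₂ y - u₂ x))|
              + |(|u₁ y - u₁ x| ^ (p - 2) * (u₁ y - u₁ x))| := abs_sub _ _
        _ ≤ K * (c u₂ x + c u₂ y) + K * (c u₁ x + c u₁ y) := by
            exact add_le_add (hphib u₂ x y) (hphib u₁ x y)
        _ = K * (cc x + cc y) := by simp only [hccdef]; ring
      calc |q (u₁ x - u₂ x)| * |(|u₂ y - u₂ x| ^ (p - 2) * (u₂ y - u₂ x)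
            - |u₁ y - u₁ x| ^ (p - 2) * (u₁ y - u₁ x))| * w x y
          ≤ M * (K * (cc x + cc y)) * w x y := by
            apply mul_le_mul_of_nonneg_right _ (hw x y)
            exact mul_le_mul (hM _) hb (abs_nonneg _) hM0
      _ = M * K * (cc x * w x y + cc y * w x y) := by ring
  -- rows of F are summable
  have hFrow : ∀ x, Summable (fun y => F (x, y)) := by
    intro x
    have h₁ := hrow u₁ hc₁d x
    have h₂ := hrow u₂ hc₂d x
    apply ((h₂.sub h₁).mul_left (q (u₁ x - u₂ x))).congr
    intro y
    rw [hF]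
    ring
  -- row identity
  have hrowid : ∀ x, q (u₁ x - u₂ x) * (v₁ x - v₂ x) * d x = ∑' y, F (x, y) := by
    intro x
    have hd0 : d x ≠ 0 := (hdpos x).ne'
    have h₁ := hrow u₁ hc₁d x
    have h₂ := hrow u₂ hc₂d x
    have hR : ∑' y, F (x, y) = q (u₁ x - u₂ x) *
        ((∑' y, |u₂ y - u₂ x| ^ (p - 2) * (u₂ y - u₂ x) * w x y)
          - ∑' y, |u₁ y - u₁ x| ^ (p - 2) * (u₁ y - u₁ x) * w x y) := by
      rw [← Summable.tsum_sub h₂ h₁, ← tsum_mul_left]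
      apply tsum_congr
      intro y
      rw [hF]
      ring
    rw [hR, hv₁ x, hv₂ x]
    field_simp
    ring
  -- sum equals double sum
  have hS : (∑' x, q (u₁ x - u₂ x) * (v₁ x - v₂ x) * d x) = ∑' z : V × V, F z := by
    rw [Summable.tsum_prod' hFsum hFrow]
    exact tsum_congr hrowid
  have hFswapsum : Summable (fun z : V × V => F (z.2, z.1)) :=
    (Equiv.prodComm V V).summable_iff.mpr hFsum
  have hswap : ∑' z : V × V, F (z.2, z.1) = ∑' z : V × V, F z :=
    (Equiv.prodComm V V).tsum_eq F
  -- pointwise nonnegativity of the symmetrized sum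
  have hpt : ∀ z : V × V, 0 ≤ F z + F (z.2, z.1) := by
    rintro ⟨x, y⟩
    have e₁ : |u₁ x - u₁ y| ^ (p - 2) * (u₁ x - u₁ y)
        = -(|u₁ y - u₁ x| ^ (p - 2) * (u₁ y - u₁ x)) := by
      simpa [neg_sub] using phi_odd p (u₁ y - u₁ x)
    have e₂ : |u₂ x - u₂ y| ^ (p - 2) * (u₂ x - u₂ y)
        = -(|u₂ y - u₂ x| ^ (p - 2) * (u₂ y - u₂ x)) := by
      simpa [neg_sub] using phi_odd p (u₂ y - u₂ x)
    have hkey : 0 ≤ (q (u₁ x - u₂ x) - q (u₁ y - u₂ y)) *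
        ((|u₂ y - u₂ x| ^ (p - 2) * (u₂ y - u₂ x))
          - |u₁ y - u₁ x| ^ (p - 2) * (u₁ y - u₁ x)) := by
      rcases le_total (u₁ y - u₁ x) (u₂ y - u₂ x) with hab | hab
      · apply mul_nonneg
        · have : u₁ y - u₂ y ≤ u₁ x - u₂ x := by linarith
          exact sub_nonneg.2 (hqmono this)
        · exact sub_nonneg.2 (phi_mono p hp hab)
      · have h1 : q (u₁ x - u₂ x) - q (u₁ y - u₂ y) ≤ 0 := by
          have : u₁ x - u₂ x ≤ u₁ y - u₂ y := by linarith
          exact sub_nonpos.2 (hqmono this)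
        have h2 : (|u₂ y - u₂ x| ^ (p - 2) * (u₂ y - u₂ x))
            - |u₁ y - u₁ x| ^ (p - 2) * (u₁ y - u₁ x) ≤ 0 :=
          sub_nonpos.2 (phi_mono p hp hab)
        nlinarith
    have hcomb : F (x, y) + F (y, x) = (q (u₁ x - u₂ x) - q (u₁ y - u₂ y)) *
        ((|u₂ y - u₂ x| ^ (p - 2) * (u₂ y - u₂ x))
          - |u₁ y - u₁ x| ^ (p - 2) * (u₁ y - u₁ x)) * w x y := by
      rw [hF]
      simp only
      rw [e₁, e₂, hsymm y x]
      ring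
    show 0 ≤ F (x, y) + F (y, x)
    rw [hcomb]
    exact mul_nonneg hkey (hw x y)
  -- conclude
  have h2S : (0:ℝ) ≤ 2 * ∑' x, q (u₁ x - u₂ x) * (v₁ x - v₂ x) * d x := by
    have : 0 ≤ ∑' z : V × V, (F z + F (z.2, z.1)) := tsum_nonneg hpt
    rw [Summable.tsum_add hFsum hFswapsum, hswap, ← hS] at this
    linarith
  linarith
end

section
/- Mosco limit lower bound: suppose p_j → ∞, u_{p_j} ⇀ u weakly in L²(V,ν_G), and there is a constant C with ∑_{x,y} |u_{p_j}(y)-u_{p_j}(x)|^{p_j} w_{xy} ≤ C p_j for all j. Then |u(y)-u(x)| ≤ 1 whenever x ∼ y. -/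
open Filter Topology

/-!
Testing the weak convergence against a point mass gives pointwise convergence `uⱼ → u`.
The single edge term `|uⱼ y - uⱼ x| ^ pⱼ * w x y` of the energy bounds `|uⱼ y - uⱼ x|` by
`(C / w x y * pⱼ) ^ (1 / pⱼ)`, and `(K * p) ^ (1 / p) → 1` as `p → ∞`.
-/

theorem tendsto_apply_of_tendsto_tsum_mul_mul {V ι : Type*} {l : Filter ι} {d : V → ℝ}
    {f : ι → V → ℝ} {g : V → ℝ} {z : V} (hdz : d z ≠ 0)
    (hweak : ∀ φ : V → ℝ, (Summable fun x => φ x ^ 2 * d x) →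
      Tendsto (fun i => ∑' x, f i x * φ x * d x) l (𝓝 (∑' x, g x * φ x * d x))) :
    Tendsto (fun i => f i z) l (𝓝 (g z)) := by
  classical
  have hsingle : ∀ h : V → ℝ, ∑' x, h x * (Pi.single z (d z)⁻¹ : V → ℝ) x * d x = h z := by
    intro h
    rw [tsum_eq_single z fun x hx => by simp [hx], Pi.single_eq_same, inv_mul_cancel_right₀ hdz]
  have htest : Summable fun x => (Pi.single z (d z)⁻¹ : V → ℝ) x ^ 2 * d x :=
    summable_of_ne_finset_zero (s := {z}) fun x hx => by simp_all
  simpa only [hsingle] using hweak _ htest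

theorem tendsto_mul_rpow_one_div_atTop {K : ℝ} (hK : 0 < K) :
    Tendsto (fun x : ℝ => (K * x) ^ (1 / x)) atTop (𝓝 1) := by
  have hconst : Tendsto (fun x : ℝ => K ^ (1 / x)) atTop (𝓝 1) := by
    simpa using tendsto_const_nhds.rpow
      ((tendsto_const_nhds (x := (1 : ℝ))).div_atTop tendsto_id) (.inl hK.ne')
  have hprod : Tendsto (fun x : ℝ => K ^ (1 / x) * x ^ (1 / x)) atTop (𝓝 1) := by
    simpa using hconst.mul tendsto_rpow_div
  refine hprod.congr' ?_
  filter_upwards [eventually_ge_atTop 0] with x hx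
  rw [Real.mul_rpow hK.le hx]

theorem le_one_of_tendsto_of_rpow_le_mul {ι : Type*} {l : Filter ι} [l.NeBot] {a p : ι → ℝ}
    {A K : ℝ} (hp : Tendsto p l atTop) (ha : Tendsto a l (𝓝 A)) (ha0 : ∀ᶠ i in l, 0 ≤ a i)
    (hbound : ∀ᶠ i in l, a i ^ p i ≤ K * p i) : A ≤ 1 := by
  set K' := max K 1
  have hK' : 0 < K' := lt_max_of_lt_right one_pos
  have hroot : ∀ᶠ i in l, a i ≤ (K' * p i) ^ (1 / p i) := by
    filter_upwards [ha0, hbound, hp.eventually_gt_atTop 0] with i hai hi hpi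
    calc a i = (a i ^ p i) ^ (1 / p i) := by
          rw [← Real.rpow_mul hai, mul_one_div_cancel hpi.ne', Real.rpow_one]
      _ ≤ (K' * p i) ^ (1 / p i) := by
          gcongr
          exact hi.trans (mul_le_mul_of_nonneg_right (le_max_left K 1) hpi.le)
  exact le_of_tendsto_of_tendsto ha ((tendsto_mul_rpow_one_div_atTop hK').comp hp) hroot

theorem stmt8_general {V : Type*} (w : V → V → ℝ) (d : V → ℝ)
    (hw : ∀ x y, 0 ≤ w x y) (hdpos : ∀ x, 0 < d x)
    (p : ℕ → ℝ) (hp : Tendsto p atTop atTop)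
    (uj : ℕ → V → ℝ) (u : V → ℝ)
    (hweak : ∀ φ : V → ℝ, (Summable fun x => (φ x) ^ 2 * d x) →
      Tendsto (fun j => ∑' x, uj j x * φ x * d x) atTop
        (nhds (∑' x, u x * φ x * d x)))
    (C : ℝ)
    (hsumm : ∀ j, Summable fun q : V × V => |uj j q.2 - uj j q.1| ^ (p j) * w q.1 q.2)
    (hbound : ∀ j, ∑' q : V × V, |uj j q.2 - uj j q.1| ^ (p j) * w q.1 q.2 ≤ C * p j) :
    ∀ x y, w x y ≠ 0 → |u y - u x| ≤ 1 := by
  intro x y hxy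
  have hwxy : 0 < w x y := (hw x y).lt_of_ne' hxy
  have hpt (z : V) : Tendsto (fun j => uj j z) atTop (𝓝 (u z)) :=
    tendsto_apply_of_tendsto_tsum_mul_mul (hdpos z).ne' hweak
  have hedge (j : ℕ) : |uj j y - uj j x| ^ p j ≤ C / w x y * p j := by
    have hterm : |uj j y - uj j x| ^ p j * w x y ≤ C * p j :=
      ((hsumm j).le_tsum (x, y) fun q _ => mul_nonneg (by positivity) (hw _ _)).trans (hbound j)
    rwa [div_mul_eq_mul_div, le_div_iff₀ hwxy]
  exact le_one_of_tendsto_of_rpow_le_mul hp ((hpt y).sub (hpt x)).abs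
    (.of_forall fun _ => abs_nonneg _) (.of_forall hedge)

/-- Mosco limit lower bound: a weak limit of functions with controlled p_j-energy
satisfies the slope constraint. -/
theorem stmt8 {V : Type*} [Countable V] (w : V → V → ℝ) (d : V → ℝ)
    (hw : ∀ x y, 0 ≤ w x y) (hsymm : ∀ x y, w x y = w y x)
    (hd : ∀ x, d x = ∑' y, w x y) (hdpos : ∀ x, 0 < d x)
    (p : ℕ → ℝ) (hp3 : ∀ j, 3 ≤ p j) (hp : Tendsto p atTop atTop)
    (uj : ℕ → V → ℝ) (u : V → ℝ)
    (hu2 : Summable fun x => (u x) ^ 2 * d x)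
    (huj2 : ∀ j, Summable fun x => (uj j x) ^ 2 * d x)
    (hweak : ∀ φ : V → ℝ, (Summable fun x => (φ x) ^ 2 * d x) →
      Tendsto (fun j => ∑' x, uj j x * φ x * d x) atTop
        (nhds (∑' x, u x * φ x * d x)))
    (C : ℝ)
    (hsumm : ∀ j, Summable fun q : V × V => |uj j q.2 - uj j q.1| ^ (p j) * w q.1 q.2)
    (hbound : ∀ j, ∑' q : V × V, |uj j q.2 - uj j q.1| ^ (p j) * w q.1 q.2 ≤ C * p j) :
    ∀ x y, w x y ≠ 0 → |u y - u x| ≤ 1 :=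
  stmt8_general w d hw hdpos p hp uj u hweak C hsumm hbound
end

section
/- The functionals J_p^G converge to I_{K_∞^G} in the sense of Mosco in L²(V,ν_G) as p → ∞, where J_p^G(u) = (1/(2p)) ∑_{x,y} |u(y)-u(x)|^p w_{xy} on L²∩L^p (+∞ otherwise), and I_{K_∞^G} is the indicator function of K_∞^G = { u ∈ L²(V,ν_G) : |u(y)-u(x)| ≤ 1 if x ∼ y }. -/
/-!
On `K_∞` the truncations `max (-n) (min u n)` converge to `u` in `L²(d)`, stay in `K_∞` and are
bounded, hence lie in every `Lᵖ(d)`; since `|u y - u x| ≤ 1` along edges, each edge term satisfies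
`|u y - u x|ᵖ ≤ |u y - u x|² ≤ 2 (u x² + u y²)`, so `J_p` of the truncations is at most
`(2 / p) ‖u‖²`, which tends to `0`. Conversely, testing weak convergence against `δ_z / d z` gives
pointwise convergence, so if `u ∉ K_∞` there is an edge `xy` with `|uₙ y - uₙ x| ≥ s > 1` eventually,
and then `J_p(uₙ) ≥ sᵖ w_{xy} / (2p) → ∞`.
-/

open Filter ENNReal Topology

namespace WeightedGraph

variable {V : Type*}

noncomputable def pEnergy (w : V → V → ℝ) (p : ℝ) (u : V → ℝ) : ℝ :=
  ∑' q : V × V, |u q.2 - u q.1| ^ p * w q.1 q.2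

open Classical in
/-- The functional `J_p^G`. -/
noncomputable def energyFunctional (w : V → V → ℝ) (d : V → ℝ) (p : ℝ) (u : V → ℝ) : ℝ≥0∞ :=
  if (Summable fun x => u x ^ 2 * d x) ∧ Summable fun x => |u x| ^ p * d x then
    ENNReal.ofReal (1 / (2 * p) * pEnergy w p u)
  else ⊤

def LipschitzOnEdges (w : V → V → ℝ) (u : V → ℝ) : Prop :=
  ∀ x y, w x y ≠ 0 → |u y - u x| ≤ 1

open Classical in
/-- The indicator function `I_{K_∞^G}`. -/
noncomputable def lipschitzIndicator (w : V → V → ℝ) (d : V → ℝ) (u : V → ℝ) : ℝ≥0∞ :=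
  if (Summable fun x => u x ^ 2 * d x) ∧ LipschitzOnEdges w u then 0 else ⊤

def truncate (n a : ℝ) : ℝ := max (-n) (min a n)

theorem abs_truncate_le_abs {n : ℝ} (hn : 0 ≤ n) (a : ℝ) : |truncate n a| ≤ |a| := by
  unfold truncate; grind

theorem abs_truncate_le {n : ℝ} (hn : 0 ≤ n) (a : ℝ) : |truncate n a| ≤ n := by
  unfold truncate; grind

theorem truncate_eq_self {n a : ℝ} (h : |a| ≤ n) : truncate n a = a := by
  unfold truncate; grind

theorem abs_truncate_sub_truncate_le (n a b : ℝ) : |truncate n b - truncate n a| ≤ |b - a| :=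
  calc |truncate n b - truncate n a| = |max (min b n) (-n) - max (min a n) (-n)| := by
        rw [truncate, truncate, max_comm, max_comm (-n)]
    _ ≤ |min b n - min a n| := abs_max_sub_max_le_abs _ _ _
    _ ≤ |b - a| := by simpa using abs_min_sub_min_le_max b n a n

theorem abs_sub_rpow_le_two_rpow_mul {p : ℝ} (hp : 0 ≤ p) (a b : ℝ) :
    |b - a| ^ p ≤ 2 ^ p * (|a| ^ p + |b| ^ p) := by
  have hmax : |b - a| ≤ 2 * max |a| |b| := by
    linarith [abs_sub b a, le_max_left |a| |b|, le_max_right |a| |b|]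
  have hmax_rpow : max |a| |b| ^ p ≤ |a| ^ p + |b| ^ p := by
    rcases max_cases |a| |b| with ⟨h, _⟩ | ⟨h, _⟩ <;> rw [h] <;> simp [Real.rpow_nonneg]
  calc |b - a| ^ p ≤ (2 * max |a| |b|) ^ p := by gcongr
    _ = 2 ^ p * max |a| |b| ^ p := Real.mul_rpow zero_le_two (by positivity)
    _ ≤ 2 ^ p * (|a| ^ p + |b| ^ p) := by gcongr

theorem abs_rpow_le_rpow_sub_two_mul_sq {a M p : ℝ} (ha : |a| ≤ M) (hp : 2 ≤ p) :
    |a| ^ p ≤ M ^ (p - 2) * a ^ 2 := by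
  rcases (abs_nonneg a).eq_or_lt with h0 | h0
  · rw [← h0, Real.zero_rpow (by linarith), abs_eq_zero.mp h0.symm]
    simp
  · calc |a| ^ p = |a| ^ (p - 2) * |a| ^ (2 : ℝ) := by
          rw [← Real.rpow_add h0]; norm_num
      _ ≤ M ^ (p - 2) * a ^ 2 := by
          rw [Real.rpow_two, sq_abs]; gcongr

theorem tendsto_rpow_div_self_atTop {s : ℝ} (hs : 1 < s) :
    Tendsto (fun t : ℝ => s ^ t / t) atTop atTop := by
  refine (tendsto_exp_mul_div_rpow_atTop 1 (Real.log s) (Real.log_pos hs)).congr' ?_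
  filter_upwards [eventually_gt_atTop 0] with t ht
  rw [Real.rpow_one, Real.rpow_def_of_pos (by linarith), mul_comm]

theorem tendsto_apply_of_tendsto_tsum_mul {ι : Type*} {l : Filter ι} {d u : V → ℝ}
    {un : ι → V → ℝ}
    (hweak : ∀ φ : V → ℝ, (Summable fun x => φ x ^ 2 * d x) →
      Tendsto (fun n => ∑' x, un n x * φ x * d x) l (𝓝 (∑' x, u x * φ x * d x)))
    {z : V} (hz : d z ≠ 0) :
    Tendsto (fun n => un n z) l (𝓝 (u z)) := by
  classical
  have heval : ∀ v : V → ℝ, ∑' x, v x * (Pi.single z (d z)⁻¹ : V → ℝ) x * d x = v z := fun v => by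
    rw [tsum_eq_single z fun x hx => by simp [hx]]
    simp [hz]
  have hφ : Summable fun x => (Pi.single z (d z)⁻¹ : V → ℝ) x ^ 2 * d x :=
    summable_of_ne_finset_zero (s := {z}) fun x hx => by simp_all
  simpa only [heval] using hweak _ hφ

variable {w : V → V → ℝ} {d g : V → ℝ} {a : ℝ}

theorem hasSum_mul_weight_fst (hw : ∀ x y, 0 ≤ w x y) (hd : ∀ x, HasSum (w x) (d x))
    (hg : ∀ x, 0 ≤ g x) (hgd : HasSum (fun x => g x * d x) a) :
    HasSum (fun q : V × V => g q.1 * w q.1 q.2) a := by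
  have hfib : ∀ x, HasSum (fun y => g x * w x y) (g x * d x) := fun x => (hd x).mul_left (g x)
  have hs : Summable fun q : V × V => g q.1 * w q.1 q.2 :=
    (summable_prod_of_nonneg fun q => mul_nonneg (hg _) (hw _ _)).2
      ⟨fun x => (hfib x).summable, hgd.summable.congr fun x => (hfib x).tsum_eq.symm⟩
  rw [← (hs.hasSum.prod_fiberwise hfib).unique hgd]
  exact hs.hasSum

theorem hasSum_mul_weight_snd (hw : ∀ x y, 0 ≤ w x y) (hsymm : ∀ x y, w x y = w y x)
    (hd : ∀ x, HasSum (w x) (d x)) (hg : ∀ x, 0 ≤ g x) (hgd : HasSum (fun x => g x * d x) a) :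
    HasSum (fun q : V × V => g q.2 * w q.1 q.2) a := by
  have := (Equiv.prodComm V V).hasSum_iff.2 (hasSum_mul_weight_fst hw hd hg hgd)
  simpa [Function.comp_def, hsymm] using this

theorem hasSum_add_mul_weight (hw : ∀ x y, 0 ≤ w x y) (hsymm : ∀ x y, w x y = w y x)
    (hd : ∀ x, HasSum (w x) (d x)) (hg : ∀ x, 0 ≤ g x) (hgd : HasSum (fun x => g x * d x) a) :
    HasSum (fun q : V × V => (g q.1 + g q.2) * w q.1 q.2) (2 * a) := by
  simpa only [add_mul, two_mul] using
    (hasSum_mul_weight_fst hw hd hg hgd).add (hasSum_mul_weight_snd hw hsymm hd hg hgd)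

theorem summable_pEnergy (hw : ∀ x y, 0 ≤ w x y) (hsymm : ∀ x y, w x y = w y x)
    (hd : ∀ x, HasSum (w x) (d x)) {p : ℝ} (hp : 0 ≤ p) {u : V → ℝ}
    (hu : Summable fun x => |u x| ^ p * d x) :
    Summable fun q : V × V => |u q.2 - u q.1| ^ p * w q.1 q.2 := by
  have hsum := hasSum_add_mul_weight hw hsymm hd (g := fun x => |u x| ^ p)
    (fun x => by positivity) hu.hasSum
  refine (hsum.summable.mul_left (2 ^ p)).of_nonneg_of_le
    (fun q => mul_nonneg (by positivity) (hw _ _)) fun q => ?_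
  rw [← mul_assoc]
  exact mul_le_mul_of_nonneg_right (abs_sub_rpow_le_two_rpow_mul hp _ _) (hw _ _)

theorem pEnergy_le_of_lipschitzOnEdges (hw : ∀ x y, 0 ≤ w x y) (hsymm : ∀ x y, w x y = w y x)
    (hd : ∀ x, HasSum (w x) (d x)) {p : ℝ} (hp : 2 ≤ p) {u : V → ℝ}
    (hu2 : Summable fun x => u x ^ 2 * d x) (hu : LipschitzOnEdges w u) :
    pEnergy w p u ≤ 4 * ∑' x, u x ^ 2 * d x := by
  have hsum := (hasSum_add_mul_weight hw hsymm hd (g := fun x => u x ^ 2)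
    (fun x => sq_nonneg _) hu2.hasSum).mul_left 2
  have hterm : ∀ q : V × V,
      |u q.2 - u q.1| ^ p * w q.1 q.2 ≤ 2 * ((u q.1 ^ 2 + u q.2 ^ 2) * w q.1 q.2) := by
    rintro ⟨x, y⟩
    rcases eq_or_ne (w x y) 0 with h | h
    · simp [h]
    have hpow : |u y - u x| ^ p ≤ (u y - u x) ^ 2 := by
      simpa using abs_rpow_le_rpow_sub_two_mul_sq (hu x y h) hp
    nlinarith [sq_nonneg (u x + u y), hw x y]
  have hs : Summable fun q : V × V => |u q.2 - u q.1| ^ p * w q.1 q.2 :=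
    hsum.summable.of_nonneg_of_le (fun q => mul_nonneg (by positivity) (hw _ _)) hterm
  calc pEnergy w p u ≤ 2 * (2 * ∑' x, u x ^ 2 * d x) := hasSum_le hterm hs.hasSum hsum
    _ = 4 * ∑' x, u x ^ 2 * d x := by ring

theorem energyFunctional_le_of_lipschitzOnEdges (hw : ∀ x y, 0 ≤ w x y)
    (hsymm : ∀ x y, w x y = w y x) (hd : ∀ x, HasSum (w x) (d x)) {p : ℝ} (hp : 2 ≤ p)
    {u : V → ℝ} {M : ℝ} (hM : ∀ x, |u x| ≤ M) (hu2 : Summable fun x => u x ^ 2 * d x)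
    (hu : LipschitzOnEdges w u) :
    energyFunctional w d p u ≤ ENNReal.ofReal (2 / p * ∑' x, u x ^ 2 * d x) := by
  have hd0 : ∀ x, 0 ≤ d x := fun x => (hd x).nonneg (hw x)
  have hup : Summable fun x => |u x| ^ p * d x :=
    (hu2.mul_left (M ^ (p - 2))).of_nonneg_of_le (fun x => mul_nonneg (by positivity) (hd0 x))
      fun x => by
        rw [← mul_assoc]
        exact mul_le_mul_of_nonneg_right (abs_rpow_le_rpow_sub_two_mul_sq (hM x) hp) (hd0 x)
  rw [energyFunctional, if_pos ⟨hu2, hup⟩]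
  refine ENNReal.ofReal_le_ofReal ?_
  calc 1 / (2 * p) * pEnergy w p u ≤ 1 / (2 * p) * (4 * ∑' x, u x ^ 2 * d x) := by
        gcongr
        exact pEnergy_le_of_lipschitzOnEdges hw hsymm hd hp hu2 hu
    _ = 2 / p * ∑' x, u x ^ 2 * d x := by field_simp; ring

theorem ofReal_edge_le_energyFunctional (hw : ∀ x y, 0 ≤ w x y)
    (hsymm : ∀ x y, w x y = w y x) (hd : ∀ x, HasSum (w x) (d x)) {p : ℝ} (hp : 0 ≤ p)
    (u : V → ℝ) (x y : V) :
    ENNReal.ofReal (1 / (2 * p) * (|u y - u x| ^ p * w x y)) ≤ energyFunctional w d p u := by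
  rw [energyFunctional]
  split_ifs with hu
  · refine ENNReal.ofReal_le_ofReal (mul_le_mul_of_nonneg_left ?_ (by positivity))
    exact (summable_pEnergy hw hsymm hd hp hu.2).le_tsum (x, y)
      fun q _ => mul_nonneg (by positivity) (hw _ _)
  · exact le_top

theorem tendsto_tsum_truncate_sub_sq (hd0 : ∀ x, 0 ≤ d x) {u : V → ℝ}
    (hu2 : Summable fun x => u x ^ 2 * d x) :
    Tendsto (fun n : ℕ => ∑' x, (truncate n (u x) - u x) ^ 2 * d x) atTop (𝓝 0) := by
  have hlim : ∀ x, Tendsto (fun n : ℕ => (truncate n (u x) - u x) ^ 2 * d x) atTop (𝓝 0) := by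
    intro x
    refine tendsto_const_nhds.congr' ?_
    filter_upwards [(tendsto_natCast_atTop_atTop (R := ℝ)).eventually_ge_atTop |u x|] with n hn
    simp [truncate_eq_self hn]
  have hbound : ∀ (n : ℕ) x, ‖(truncate n (u x) - u x) ^ 2 * d x‖ ≤ 4 * (u x ^ 2 * d x) := by
    intro n x
    have hsq : truncate n (u x) ^ 2 ≤ u x ^ 2 := sq_le_sq.2 (abs_truncate_le_abs n.cast_nonneg _)
    rw [Real.norm_of_nonneg (mul_nonneg (sq_nonneg _) (hd0 x)), ← mul_assoc]
    exact mul_le_mul_of_nonneg_right (by nlinarith [sq_nonneg (truncate n (u x) + u x)]) (hd0 x)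
  simpa using tendsto_tsum_of_dominated_convergence (hu2.mul_left 4) hlim
    (Eventually.of_forall hbound)

theorem exists_recovery_sequence (hw : ∀ x y, 0 ≤ w x y) (hsymm : ∀ x y, w x y = w y x)
    (hd : ∀ x, HasSum (w x) (d x)) {pn : ℕ → ℝ} (hp : ∀ n, 2 ≤ pn n)
    (hpTop : Tendsto pn atTop atTop) {u : V → ℝ} (hu : lipschitzIndicator w d u ≠ ⊤) :
    ∃ un : ℕ → V → ℝ, (∀ n, Summable fun x => (un n x) ^ 2 * d x) ∧
      Tendsto (fun n => ∑' x, (un n x - u x) ^ 2 * d x) atTop (𝓝 0) ∧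
      limsup (fun n => energyFunctional w d (pn n) (un n)) atTop ≤ lipschitzIndicator w d u := by
  obtain ⟨hu2, hlip⟩ : (Summable fun x => u x ^ 2 * d x) ∧ LipschitzOnEdges w u := by
    by_contra h
    exact hu (if_neg h)
  have hd0 : ∀ x, 0 ≤ d x := fun x => (hd x).nonneg (hw x)
  set un : ℕ → V → ℝ := fun n x => truncate n (u x)
  have hle : ∀ n x, un n x ^ 2 * d x ≤ u x ^ 2 * d x := fun n x =>
    mul_le_mul_of_nonneg_right (sq_le_sq.2 (abs_truncate_le_abs n.cast_nonneg _)) (hd0 x)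
  have hun2 : ∀ n, Summable fun x => un n x ^ 2 * d x := fun n =>
    hu2.of_nonneg_of_le (fun x => mul_nonneg (sq_nonneg _) (hd0 x)) (hle n)
  have hbound : ∀ n, energyFunctional w d (pn n) (un n) ≤
      ENNReal.ofReal (2 / pn n * ∑' x, u x ^ 2 * d x) := fun n => by
    have hlip_n : LipschitzOnEdges w (un n) := fun x y h =>
      (abs_truncate_sub_truncate_le _ _ _).trans (hlip x y h)
    refine (energyFunctional_le_of_lipschitzOnEdges hw hsymm hd (hp n)
      (fun x => abs_truncate_le n.cast_nonneg (u x)) (hun2 n) hlip_n).trans ?_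
    have := hp n
    gcongr ENNReal.ofReal (_ * ?_)
    exact (hun2 n).tsum_le_tsum (hle n) hu2
  have hlim : Tendsto (fun n => ENNReal.ofReal (2 / pn n * ∑' x, u x ^ 2 * d x)) atTop (𝓝 0) := by
    simpa using ENNReal.tendsto_ofReal ((tendsto_const_nhds.div_atTop hpTop).mul_const _)
  refine ⟨un, hun2, tendsto_tsum_truncate_sub_sq hd0 hu2, ?_⟩
  rw [lipschitzIndicator, if_pos ⟨hu2, hlip⟩, ← hlim.limsup_eq]
  exact limsup_le_limsup (Eventually.of_forall hbound)

theorem tendsto_energyFunctional_atTop (hw : ∀ x y, 0 ≤ w x y) (hsymm : ∀ x y, w x y = w y x)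
    (hd : ∀ x, HasSum (w x) (d x)) {pn : ℕ → ℝ} (hp : ∀ n, 0 < pn n)
    (hpTop : Tendsto pn atTop atTop) {un : ℕ → V → ℝ} {x y : V} (hxy : 0 < w x y) {s : ℝ}
    (hs : 1 < s) (hev : ∀ᶠ n in atTop, s ≤ |un n y - un n x|) :
    Tendsto (fun n => energyFunctional w d (pn n) (un n)) atTop (𝓝 ⊤) := by
  have hgrow : Tendsto (fun n => 1 / (2 * pn n) * (s ^ pn n * w x y)) atTop atTop := by
    refine (((tendsto_rpow_div_self_atTop hs).comp hpTop).atTop_mul_const (half_pos hxy)).congr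
      fun n => ?_
    have := (hp n).ne'
    simp only [Function.comp_apply]
    field_simp
  refine tendsto_nhds_top_mono (ENNReal.tendsto_ofReal_atTop.comp hgrow) ?_
  filter_upwards [hev] with n hn
  refine le_trans ?_ (ofReal_edge_le_energyFunctional hw hsymm hd (hp n).le (un n) x y)
  have := hp n
  simp only [Function.comp_apply]
  gcongr

theorem lipschitzIndicator_le_liminf (hw : ∀ x y, 0 ≤ w x y) (hsymm : ∀ x y, w x y = w y x)
    (hd : ∀ x, HasSum (w x) (d x)) (hd_ne : ∀ x, d x ≠ 0) {pn : ℕ → ℝ} (hp : ∀ n, 0 < pn n)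
    (hpTop : Tendsto pn atTop atTop) {u : V → ℝ} {un : ℕ → V → ℝ}
    (hu2 : Summable fun x => u x ^ 2 * d x)
    (hweak : ∀ φ : V → ℝ, (Summable fun x => φ x ^ 2 * d x) →
      Tendsto (fun n => ∑' x, un n x * φ x * d x) atTop (𝓝 (∑' x, u x * φ x * d x))) :
    lipschitzIndicator w d u ≤ liminf (fun n => energyFunctional w d (pn n) (un n)) atTop := by
  by_cases hlip : LipschitzOnEdges w u
  · rw [lipschitzIndicator, if_pos ⟨hu2, hlip⟩]
    exact zero_le
  obtain ⟨x, y, hxy, hgt⟩ : ∃ x y, w x y ≠ 0 ∧ 1 < |u y - u x| := by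
    simpa [LipschitzOnEdges] using hlip
  have hconv : Tendsto (fun n => |un n y - un n x|) atTop (𝓝 |u y - u x|) :=
    ((tendsto_apply_of_tendsto_tsum_mul hweak (hd_ne y)).sub
      (tendsto_apply_of_tendsto_tsum_mul hweak (hd_ne x))).abs
  have hev : ∀ᶠ n in atTop, (1 + |u y - u x|) / 2 ≤ |un n y - un n x| :=
    hconv.eventually (eventually_ge_nhds (by linarith))
  rw [(tendsto_energyFunctional_atTop hw hsymm hd hp hpTop ((hw x y).lt_of_ne' hxy)
    (by linarith) hev).liminf_eq]
  exact le_top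

end WeightedGraph

open WeightedGraph

theorem stmt9_general {V : Type*} (w : V → V → ℝ) (d : V → ℝ)
    (hw : ∀ x y, 0 ≤ w x y) (hsymm : ∀ x y, w x y = w y x)
    (hd : ∀ x, d x = ∑' y, w x y) (hdpos : ∀ x, 0 < d x)
    (J : ℝ → (V → ℝ) → ℝ≥0∞)
    (hJ : ∀ (p : ℝ) (u : V → ℝ),
      (((Summable fun x => (u x) ^ 2 * d x) ∧ (Summable fun x => |u x| ^ p * d x)) →
        J p u =
          ENNReal.ofReal ((1 / (2 * p)) * ∑' q : V × V, |u q.2 - u q.1| ^ p * w q.1 q.2)) ∧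
      (¬((Summable fun x => (u x) ^ 2 * d x) ∧ (Summable fun x => |u x| ^ p * d x)) →
        J p u = ⊤))
    (IK : (V → ℝ) → ℝ≥0∞)
    (hIK : ∀ u : V → ℝ,
      (((Summable fun x => (u x) ^ 2 * d x) ∧ (∀ x y, w x y ≠ 0 → |u y - u x| ≤ 1)) →
        IK u = 0) ∧
      (¬((Summable fun x => (u x) ^ 2 * d x) ∧ (∀ x y, w x y ≠ 0 → |u y - u x| ≤ 1)) →
        IK u = ⊤)) :
    ∀ pn : ℕ → ℝ, (∀ n, 3 ≤ pn n) → Tendsto pn atTop atTop →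
      -- (i) recovery sequences
      ((∀ u : V → ℝ, IK u ≠ ⊤ →
          ∃ un : ℕ → V → ℝ, (∀ n, Summable fun x => (un n x) ^ 2 * d x) ∧
            Tendsto (fun n => ∑' x, (un n x - u x) ^ 2 * d x) atTop (nhds 0) ∧
            Filter.limsup (fun n => J (pn n) (un n)) atTop ≤ IK u) ∧
      -- (ii) weak lower semicontinuity
        (∀ (u : V → ℝ) (un : ℕ → V → ℝ),
          (Summable fun x => (u x) ^ 2 * d x) →
          (∀ n, Summable fun x => (un n x) ^ 2 * d x) →
          (∀ φ : V → ℝ, (Summable fun x => (φ x) ^ 2 * d x) →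
            Tendsto (fun n => ∑' x, un n x * φ x * d x) atTop
              (nhds (∑' x, u x * φ x * d x))) →
          IK u ≤ Filter.liminf (fun n => J (pn n) (un n)) atTop)) := by
  intro pn hp3 hpTop
  have hw_sum : ∀ x, HasSum (w x) (d x) := fun x => by
    have hs : Summable (w x) := by
      by_contra h
      exact (hdpos x).ne' (by rw [hd x, tsum_eq_zero_of_not_summable h])
    rw [hd x]
    exact hs.hasSum
  obtain rfl : J = energyFunctional w d := by
    funext p u
    unfold energyFunctional
    split_ifs with h
    exacts [(hJ p u).1 h, (hJ p u).2 h]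
  obtain rfl : IK = lipschitzIndicator w d := by
    funext u
    unfold lipschitzIndicator
    split_ifs with h
    exacts [(hIK u).1 h, (hIK u).2 h]
  exact ⟨fun u hu => exists_recovery_sequence hw hsymm hw_sum (fun n => by linarith [hp3 n])
      hpTop hu,
    fun u un hu2 _ hweak => lipschitzIndicator_le_liminf hw hsymm hw_sum (fun x => (hdpos x).ne')
      (fun n => by linarith [hp3 n]) hpTop hu2 hweak⟩

/-- Mosco convergence of J_p^G to the indicator function of K_∞^G in L²(V,ν_G). -/
theorem stmt9 {V : Type*} [Countable V] (w : V → V → ℝ) (d : V → ℝ)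
    (hw : ∀ x y, 0 ≤ w x y) (hsymm : ∀ x y, w x y = w y x)
    (hd : ∀ x, d x = ∑' y, w x y) (hdpos : ∀ x, 0 < d x)
    (J : ℝ → (V → ℝ) → ℝ≥0∞)
    (hJ : ∀ (p : ℝ) (u : V → ℝ),
      (((Summable fun x => (u x) ^ 2 * d x) ∧ (Summable fun x => |u x| ^ p * d x)) →
        J p u =
          ENNReal.ofReal ((1 / (2 * p)) * ∑' q : V × V, |u q.2 - u q.1| ^ p * w q.1 q.2)) ∧
      (¬((Summable fun x => (u x) ^ 2 * d x) ∧ (Summable fun x => |u x| ^ p * d x)) →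
        J p u = ⊤))
    (IK : (V → ℝ) → ℝ≥0∞)
    (hIK : ∀ u : V → ℝ,
      (((Summable fun x => (u x) ^ 2 * d x) ∧ (∀ x y, w x y ≠ 0 → |u y - u x| ≤ 1)) →
        IK u = 0) ∧
      (¬((Summable fun x => (u x) ^ 2 * d x) ∧ (∀ x y, w x y ≠ 0 → |u y - u x| ≤ 1)) →
        IK u = ⊤)) :
    ∀ pn : ℕ → ℝ, (∀ n, 3 ≤ pn n) → Tendsto pn atTop atTop →
      -- (i) recovery sequences
      ((∀ u : V → ℝ, IK u ≠ ⊤ →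
          ∃ un : ℕ → V → ℝ, (∀ n, Summable fun x => (un n x) ^ 2 * d x) ∧
            Tendsto (fun n => ∑' x, (un n x - u x) ^ 2 * d x) atTop (nhds 0) ∧
            Filter.limsup (fun n => J (pn n) (un n)) atTop ≤ IK u) ∧
      -- (ii) weak lower semicontinuity
        (∀ (u : V → ℝ) (un : ℕ → V → ℝ),
          (Summable fun x => (u x) ^ 2 * d x) →
          (∀ n, Summable fun x => (un n x) ^ 2 * d x) →
          (∀ φ : V → ℝ, (Summable fun x => (φ x) ^ 2 * d x) →
            Tendsto (fun n => ∑' x, un n x * φ x * d x) atTop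
              (nhds (∑' x, u x * φ x * d x))) →
          IK u ≤ Filter.liminf (fun n => J (pn n) (un n)) atTop)) :=
  stmt9_general w d hw hsymm hd hdpos J hJ IK hIK
end

section
/- Mass conservation for the limit problem on a graph of finite total measure: if ν_G(V) < ∞ and u is a strong solution of u'(t) + ∂I_{K_∞^G}(u(t)) ∋ f(t), then for a.e. t, ∫_V u_t(t,x) dν_G(x) = ∫_V f(t,x) dν_G(x). -/
open Filter MeasureTheory

/-! Since the total mass `∑ d` is finite, `u(t) + c` is an admissible test function for every
constant `c`, and testing the variational inequality with it gives `c · ∑ (f - uₜ) d ≤ 0`.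
Taking `c = ±1` forces `∑ (f - uₜ) d = 0`. -/

section WeightedSummable

variable {V : Type*} {d : V → ℝ}

theorem summable_mul_of_summable_sq_mul (hd : ∀ x, 0 ≤ d x) (hfin : Summable d) {g : V → ℝ}
    (hg : Summable fun x => g x ^ 2 * d x) : Summable fun x => g x * d x := by
  refine .of_norm_bounded ((hg.add hfin).div_const 2) fun x => ?_
  have hx := hd x
  rw [Real.norm_eq_abs, abs_mul, abs_of_nonneg hx]
  nlinarith [sq_nonneg (|g x| - 1), sq_abs (g x)]

theorem summable_add_const_sq_mul (hd : ∀ x, 0 ≤ d x) (hfin : Summable d) {g : V → ℝ}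
    (hg : Summable fun x => g x ^ 2 * d x) (c : ℝ) :
    Summable fun x => (g x + c) ^ 2 * d x := by
  have hgd := summable_mul_of_summable_sq_mul hd hfin hg
  convert hg.add ((hgd.mul_left (2 * c)).add (hfin.mul_left (c ^ 2))) using 2 with x
  ring

end WeightedSummable

theorem stmt14_general {V : Type*} (w : V → V → ℝ) (d : V → ℝ)
    (hdpos : ∀ x, 0 < d x)
    (hfin : Summable d)
    (u ut f : ℝ → V → ℝ)
    (hf2 : ∀ᵐ t ∂(volume : Measure ℝ), Summable fun x => (f t x) ^ 2 * d x)
    (hut2 : ∀ᵐ t ∂(volume : Measure ℝ), Summable fun x => (ut t x) ^ 2 * d x)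
    (hsol : ∀ᵐ t ∂(volume : Measure ℝ),
      ((Summable fun x => (u t x) ^ 2 * d x) ∧ ∀ x y, w x y ≠ 0 → |u t y - u t x| ≤ 1) ∧
      ∀ v : V → ℝ, (Summable fun x => (v x) ^ 2 * d x) →
        (∀ x y, w x y ≠ 0 → |v y - v x| ≤ 1) →
          ∑' x, (f t x - ut t x) * (v x - u t x) * d x ≤ 0) :
    ∀ᵐ t ∂(volume : Measure ℝ), ∑' x, ut t x * d x = ∑' x, f t x * d x := by
  have hd : ∀ x, 0 ≤ d x := fun x => (hdpos x).le
  filter_upwards [hf2, hut2, hsol] with t hft hutt ⟨⟨hu2, hlip⟩, hvar⟩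
  have htest (c : ℝ) : (∑' x, (f t x - ut t x) * d x) * c ≤ 0 := by
    rw [← tsum_mul_right]
    refine (tsum_congr fun x => by ring).trans_le <| hvar (u t · + c)
      (summable_add_const_sq_mul hd hfin hu2 c) fun x y h => by simpa using hlip x y h
  have hzero : ∑' x, (f t x - ut t x) * d x = 0 := by
    linarith [htest 1, htest (-1)]
  simp only [sub_mul] at hzero
  rw [(summable_mul_of_summable_sq_mul hd hfin hft).tsum_sub
    (summable_mul_of_summable_sq_mul hd hfin hutt)] at hzero
  linarith

/-- Mass conservation for the limit sandpile problem when ν_G(V) < ∞. -/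
theorem stmt14 {V : Type*} [Countable V] (w : V → V → ℝ) (d : V → ℝ)
    (hw : ∀ x y, 0 ≤ w x y) (hsymm : ∀ x y, w x y = w y x)
    (hd : ∀ x, d x = ∑' y, w x y) (hdpos : ∀ x, 0 < d x)
    (hfin : Summable d)
    (u ut f : ℝ → V → ℝ)
    (hcont : ∀ x, Continuous fun t => u t x)
    (hderiv : ∀ x, ∀ᵐ t ∂(volume : Measure ℝ), HasDerivAt (fun s => u s x) (ut t x) t)
    (hf2 : ∀ᵐ t ∂(volume : Measure ℝ), Summable fun x => (f t x) ^ 2 * d x)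
    (hut2 : ∀ᵐ t ∂(volume : Measure ℝ), Summable fun x => (ut t x) ^ 2 * d x)
    (hsol : ∀ᵐ t ∂(volume : Measure ℝ),
      ((Summable fun x => (u t x) ^ 2 * d x) ∧ ∀ x y, w x y ≠ 0 → |u t y - u t x| ≤ 1) ∧
      ∀ v : V → ℝ, (Summable fun x => (v x) ^ 2 * d x) →
        (∀ x y, w x y ≠ 0 → |v y - v x| ≤ 1) →
          ∑' x, (f t x - ut t x) * (v x - u t x) * d x ≤ 0) :
    ∀ᵐ t ∂(volume : Measure ℝ), ∑' x, ut t x * d x = ∑' x, f t x * d x :=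
  stmt14_general w d hdpos hfin u ut f hf2 hut2 hsol
end

section
/- Explicit sandpile solution on ℤ, first stage: with weights w_{xy} = 1 iff |x-y| = 1, source f(t,x) = α·1_{{0}}(x) (α>0), and u₀ = 0, the function u(t,x) = αt·1_{{0}}(x) is, for 0 ≤ t ≤ 1/α, a strong solution of the sandpile limit problem, i.e. u(t) ∈ K_∞^G and ∫_V (f(t,x)-u_t(t,x))(v(x)-u(t,x)) dν_G(x) ≤ 0 for every v ∈ K_∞^G. -/
/-! On the first stage the source exactly feeds the growth of `u`, i.e. `f = ∂ₜu`, so the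
variational inequality holds with equality for every test function `v`. What remains is that
`u(t)` lies in `K_∞^G`: it is finitely supported, and its single bump has height `α t ∈ [0, 1]`. -/

lemma mul_mem_Icc_of_nonneg_of_le_one_div {α t : ℝ} (ht : 0 ≤ t) (htα : t ≤ 1 / α) :
    0 ≤ α * t ∧ α * t ≤ 1 := by
  rcases lt_trichotomy α 0 with hα | rfl | hα
  · linarith [one_div_neg.mpr hα]
  · simp
  · exact ⟨by positivity, by rwa [le_div_iff₀ hα, mul_comm] at htα⟩

lemma hasDerivAt_ite_const_mul (p : Prop) [Decidable p] (c t : ℝ) :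
    HasDerivAt (fun s => if p then c * s else 0) (if p then c else 0) t := by
  split_ifs
  · simpa using (hasDerivAt_id t).const_mul c
  · exact hasDerivAt_const t 0

lemma summable_ite_eq_sq_mul {β : Type*} [DecidableEq β] (b : β) (c r : ℝ) :
    Summable fun x => (if x = b then c else 0) ^ 2 * r := by
  refine (hasSum_ite_eq b (c ^ 2 * r)).summable.congr fun x => ?_
  split_ifs <;> simp

lemma abs_ite_eq_sub_ite_eq_le {β : Type*} [DecidableEq β] (b x y : β) (c : ℝ) :
    |(if y = b then c else 0) - (if x = b then c else 0)| ≤ |c| := by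
  split_ifs <;> simp

theorem stmt16_general (α : ℝ)
    (u : ℝ → ℤ → ℝ) (hu : ∀ t x, u t x = if x = 0 then α * t else 0)
    (f : ℤ → ℝ) (hf : ∀ x, f x = if x = 0 then α else 0)
    (ut : ℤ → ℝ) (hut : ∀ x, ut x = if x = 0 then α else 0) :
    ∀ t : ℝ, 0 ≤ t → t ≤ 1 / α →
      (∀ x : ℤ, HasDerivAt (fun s => u s x) (ut x) t) ∧
      -- u(t) ∈ K_∞^G
      ((Summable fun x : ℤ => (u t x) ^ 2 * 2) ∧
        ∀ x y : ℤ, |x - y| = 1 → |u t y - u t x| ≤ 1) ∧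
      -- variational inequality against every v ∈ K_∞^G
      (∀ v : ℤ → ℝ, (Summable fun x : ℤ => (v x) ^ 2 * 2) →
        (∀ x y : ℤ, |x - y| = 1 → |v y - v x| ≤ 1) →
          ∑' x : ℤ, (f x - ut x) * (v x - u t x) * 2 ≤ 0) := by
  obtain rfl : u = fun t x => if x = 0 then α * t else 0 := funext₂ hu
  obtain rfl : f = fun x => if x = 0 then α else 0 := funext hf
  obtain rfl : ut = fun x => if x = 0 then α else 0 := funext hut
  intro t ht htα
  obtain ⟨hαt_nonneg, hαt_le_one⟩ := mul_mem_Icc_of_nonneg_of_le_one_div ht htα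
  refine ⟨fun x => hasDerivAt_ite_const_mul _ α t, ⟨summable_ite_eq_sq_mul 0 _ 2, ?_⟩, ?_⟩
  · intro x y _
    calc _ ≤ |α * t| := abs_ite_eq_sub_ite_eq_le 0 x y (α * t)
      _ ≤ 1 := by rwa [abs_of_nonneg hαt_nonneg]
  · intro v _ _
    simp

/-- First stage of the explicit sandpile solution on ℤ: u(t,x) = αt·1_{0}(x) is a
strong solution for 0 ≤ t ≤ 1/α. -/
theorem stmt16 (α : ℝ) (hα : 0 < α)
    (u : ℝ → ℤ → ℝ) (hu : ∀ t x, u t x = if x = 0 then α * t else 0)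
    (f : ℤ → ℝ) (hf : ∀ x, f x = if x = 0 then α else 0)
    (ut : ℤ → ℝ) (hut : ∀ x, ut x = if x = 0 then α else 0) :
    ∀ t : ℝ, 0 ≤ t → t ≤ 1 / α →
      (∀ x : ℤ, HasDerivAt (fun s => u s x) (ut x) t) ∧
      -- u(t) ∈ K_∞^G
      ((Summable fun x : ℤ => (u t x) ^ 2 * 2) ∧
        ∀ x y : ℤ, |x - y| = 1 → |u t y - u t x| ≤ 1) ∧
      -- variational inequality against every v ∈ K_∞^G
      (∀ v : ℤ → ℝ, (Summable fun x : ℤ => (v x) ^ 2 * 2) →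
        (∀ x y : ℤ, |x - y| = 1 → |v y - v x| ≤ 1) →
          ∑' x : ℤ, (f x - ut x) * (v x - u t x) * 2 ≤ 0) :=
  stmt16_general α u hu f hf ut hut
end

section
/- Explicit sandpile solution on ℤ, second stage: with w_{xy} = 1 iff |x-y|=1, f(t,x) = α·1_{{0}}(x), for t₁ = 1/α ≤ t ≤ 4/α the function u(t,x) = (α/3)(t-t₁)·1_{{-1}}(x) + (1 + (α/3)(t-t₁))·1_{{0}}(x) + (α/3)(t-t₁)·1_{{1}}(x) satisfies u(t) ∈ K_∞^G and ∫_ℤ (f(t,x)-u_t(t,x))(v(x)-u(t,x)) dν_G(x) = (2α/3)(v(0) - (v(1)+v(-1))/2 - 1) ≤ 0 for all v ∈ K_∞^G; hence it is a strong solution on that time interval. -/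
/-!
At time `t` the solution is the three-point profile `sandpileProfile s` with
`s = (α/3)(t - 1/α) ∈ [0, 1]`: its centre sits exactly one unit above its two neighbours, so it
lies in `K_∞` as long as `0 ≤ s ≤ 1`.  The source `α·1_{0}` minus the rate `(α/3)·1_{-1,0,1}`
has total mass zero, so in the variational integral the `s`-dependence cancels, leaving
`(2α/3)(v 0 - (v 1 + v (-1))/2 - 1)`; this is `≤ 0` because `v 0 - v (±1) ≤ 1` for `v ∈ K_∞`.
-/

def sandpileProfile (s : ℝ) (x : ℤ) : ℝ :=
  if x = 0 then 1 + s else if x = 1 ∨ x = -1 then s else 0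

lemma tsum_int_eq_of_eq_zero_off_neighbours {g : ℤ → ℝ}
    (hg : ∀ x, x ≠ 0 → x ≠ 1 → x ≠ -1 → g x = 0) : ∑' x, g x = g 0 + g 1 + g (-1) := by
  rw [tsum_eq_sum (s := {0, 1, -1}) fun x hx => by simp_all]
  simp [Finset.sum_insert, add_assoc]

lemma summable_int_of_eq_zero_off_neighbours {g : ℤ → ℝ}
    (hg : ∀ x, x ≠ 0 → x ≠ 1 → x ≠ -1 → g x = 0) : Summable g :=
  summable_of_ne_finset_zero (s := {0, 1, -1}) fun x hx => by simp_all

lemma hasDerivAt_sandpileProfile (x : ℤ) (s : ℝ) :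
    HasDerivAt (fun σ => sandpileProfile σ x)
      (if x = 0 ∨ x = 1 ∨ x = -1 then 1 else 0) s := by
  unfold sandpileProfile
  by_cases h0 : x = 0
  · simpa [h0] using (hasDerivAt_id' s).const_add 1
  by_cases h1 : x = 1 ∨ x = -1
  · simpa [h0, h1] using hasDerivAt_id' s
  · simpa [h0, h1] using hasDerivAt_const s (0 : ℝ)

lemma abs_sandpileProfile_sub_le_one {s : ℝ} (hs₀ : 0 ≤ s) (hs₁ : s ≤ 1) {x y : ℤ}
    (hxy : |x - y| = 1) : |sandpileProfile s y - sandpileProfile s x| ≤ 1 := by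
  have hxy' := (abs_eq zero_le_one).mp hxy
  unfold sandpileProfile
  split_ifs <;> first | omega | (rw [abs_le]; constructor <;> linarith)

lemma summable_sq_sandpileProfile (s c : ℝ) :
    Summable fun x : ℤ => sandpileProfile s x ^ 2 * c :=
  summable_int_of_eq_zero_off_neighbours fun x h0 h1 h2 => by
    simp [sandpileProfile, h0, h1, h2]

lemma tsum_source_sub_rate_mul_sub_sandpileProfile (α s : ℝ) (v : ℤ → ℝ) :
    ∑' x : ℤ, ((if x = 0 then α else 0) - (if x = 0 ∨ x = 1 ∨ x = -1 then α / 3 else 0)) *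
        (v x - sandpileProfile s x) =
      (2 * α / 3) * (v 0 - (v 1 + v (-1)) / 2 - 1) := by
  rw [tsum_int_eq_of_eq_zero_off_neighbours fun x h0 h1 h2 => by simp [h0, h1, h2]]
  norm_num [sandpileProfile]
  ring

lemma sub_avg_neighbours_le_one {v : ℤ → ℝ}
    (hv : ∀ x y : ℤ, |x - y| = 1 → |v y - v x| ≤ 1) (x : ℤ) :
    v x - (v (x + 1) + v (x - 1)) / 2 ≤ 1 := by
  have h₁ := (abs_le.mp (hv (x + 1) x (by simp))).2
  have h₂ := (abs_le.mp (hv (x - 1) x (by simp))).2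
  linarith

lemma sandpile_amplitude_mem_Icc {α t : ℝ} (hα : 0 < α) (ht₁ : 1 / α ≤ t) (ht₄ : t ≤ 4 / α) :
    0 ≤ α / 3 * (t - 1 / α) ∧ α / 3 * (t - 1 / α) ≤ 1 := by
  have hαt : α * t ≤ 4 := by rwa [le_div_iff₀ hα, mul_comm] at ht₄
  have h : α / 3 * (t - 1 / α) = (α * t - 1) / 3 := by field_simp
  exact ⟨mul_nonneg (by positivity) (by linarith), by rw [h]; linarith⟩

/-- Second stage of the explicit sandpile solution on ℤ, for 1/α ≤ t ≤ 4/α. -/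
theorem stmt17 (α : ℝ) (hα : 0 < α)
    (u : ℝ → ℤ → ℝ)
    (hu : ∀ t x, u t x =
      if x = 0 then 1 + (α / 3) * (t - 1 / α)
      else if x = 1 ∨ x = -1 then (α / 3) * (t - 1 / α)
      else 0)
    (f : ℤ → ℝ) (hf : ∀ x, f x = if x = 0 then α else 0)
    (ut : ℤ → ℝ)
    (hut : ∀ x, ut x = if x = 0 ∨ x = 1 ∨ x = -1 then α / 3 else 0) :
    ∀ t : ℝ, 1 / α ≤ t → t ≤ 4 / α →
      (∀ x : ℤ, HasDerivAt (fun s => u s x) (ut x) t) ∧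
      -- u(t) ∈ K_∞^G
      ((Summable fun x : ℤ => (u t x) ^ 2 * 2) ∧
        ∀ x y : ℤ, |x - y| = 1 → |u t y - u t x| ≤ 1) ∧
      -- explicit value of the variational expression and its nonpositivity
      (∀ v : ℤ → ℝ, (Summable fun x : ℤ => (v x) ^ 2 * 2) →
        (∀ x y : ℤ, |x - y| = 1 → |v y - v x| ≤ 1) →
          (∑' x : ℤ, (f x - ut x) * (v x - u t x) =
              (2 * α / 3) * (v 0 - (v 1 + v (-1)) / 2 - 1)) ∧
          (2 * α / 3) * (v 0 - (v 1 + v (-1)) / 2 - 1) ≤ 0) := by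
  intro t ht₁ ht₄
  obtain rfl : u = fun t => sandpileProfile (α / 3 * (t - 1 / α)) :=
    funext fun t => funext (hu t)
  obtain ⟨hs₀, hs₁⟩ := sandpile_amplitude_mem_Icc hα ht₁ ht₄
  refine ⟨fun x => ?_, ⟨summable_sq_sandpileProfile _ _,
    fun x y => abs_sandpileProfile_sub_le_one hs₀ hs₁⟩, fun v _ hv => ⟨?_, ?_⟩⟩
  · have hline := ((hasDerivAt_id t).sub_const (1 / α)).const_mul (α / 3)
    refine ((hasDerivAt_sandpileProfile x _).comp t hline).congr_deriv ?_
    rw [hut]; split_ifs <;> simp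
  · simp only [hf, hut]
    exact tsum_source_sub_rate_mul_sub_sandpileProfile α _ v
  · have hv₀ := sub_avg_neighbours_le_one hv 0
    norm_num at hv₀
    exact mul_nonpos_of_nonneg_of_nonpos (by positivity) (by linarith)
end
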